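/- (Parallel translation for $C^1$-close curves in $\mathbb{H}^3$.) Let $c, c_0 : [0,L] \to \mathscr{D}$ be piecewise $C^1$ curves in the matrix model of hyperbolic 3-space with unit parallel vector fields $v(t), v_0(t)$ along them (parallel for $\dot v = \frac{1}{2}[\dot c c^{-1}, v]$, $\dot v_0 = \frac{1}{2}[\dot c_0 c_0^{-1}, v_0]$). Suppose $\max_{0 \le t \le L} \| \dot c c^{-1} - \dot c_0 c_0^{-1} \|_{c_0(t)} < \varepsilon$ with $0 < \varepsilon \le 1/(4L)$. Then $\max_{0 \le t \le L} \| v(t) - v_0(t) \|_{c_0(t)} \le 2 \| v(0) - v_0(0) \|_{c_0(0)} + 4 L \varepsilon$. -/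

import Mathlib

open Matrix
open scoped ComplexOrder

attribute [local instance] Matrix.frobeniusNormedAddCommGroup Matrix.frobeniusNormedRing
  Matrix.frobeniusNormedSpace

/-- Membership in the matrix model `𝒟` of hyperbolic 3-space. -/
def memD (h : Matrix (Fin 2) (Fin 2) ℂ) : Prop :=
  h.IsHermitian ∧ h.det = 1 ∧ h.PosDef

/-- The norm `‖M‖_h` with `‖M‖_h² = ½ tr (M h Mᴴ h⁻¹)` for `h ∈ 𝒟` and traceless `M`. -/
noncomputable def hNorm (h M : Matrix (Fin 2) (Fin 2) ℂ) : ℝ :=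
  Real.sqrt (((2 : ℂ)⁻¹ * (M * h * Mᴴ * h⁻¹).trace).re)

/-!
Write `w = v - v₀`, `A = ċ c⁻¹` and `A₀ = ċ₀ c₀⁻¹`. Then `ẇ = ½ ⁅A₀, w⁆ + Z` with
`Z = ½ ⁅A - A₀, v⁆`. The commutator term is parallel transport along `c₀`, which preserves
`‖·‖_{c₀}`, so `d/dt ‖w‖² = Re tr (Z c₀ wᴴ c₀⁻¹) ≤ 2 ‖Z‖ ‖w‖`. Conjugating by `√c₀` turns
`‖·‖_{c₀}` into `1/√2` times the Frobenius norm, whence `‖Z‖ ≤ √2 ‖A - A₀‖ ‖v‖ ≤ √2 ε (‖w‖ + 1)`.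
Grönwall gives `‖w t‖ + 1 ≤ (‖w 0‖ + 1) exp (√2 ε t)`, and since `√2 ε L ≤ 1/2`, the bound
`exp x ≤ 1 + 2 x` on `[0, 1/2]` yields the claim.
-/
attribute [local instance] Matrix.frobeniusNormedAlgebra

open Set Filter Topology

namespace Matrix

variable {m n : Type*} [Fintype m] [Fintype n]

theorem frobenius_norm_sq_eq_re_trace (X : Matrix m n ℂ) : ‖X‖ ^ 2 = (X * Xᴴ).trace.re := by
  rw [frobenius_norm_def, ← Real.rpow_natCast, ← Real.rpow_mul (by positivity)]
  simp [Matrix.trace, Matrix.mul_apply, Complex.mul_conj', Complex.re_sum, ← Complex.ofReal_pow]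

theorem re_trace_mul_conjTranspose_le (X Y : Matrix m n ℂ) :
    (X * Yᴴ).trace.re ≤ ‖X‖ * ‖Y‖ := by
  have hsymm : (Y * Xᴴ).trace.re = (X * Yᴴ).trace.re := by
    rw [← conjTranspose_conjTranspose Y, ← conjTranspose_mul, trace_conjTranspose,
      conjTranspose_conjTranspose]
    exact Complex.conj_re _
  have hpolar : ‖X + Y‖ ^ 2 = ‖X‖ ^ 2 + ‖Y‖ ^ 2 + 2 * (X * Yᴴ).trace.re := by
    simp only [frobenius_norm_sq_eq_re_trace, conjTranspose_add, Matrix.add_mul, Matrix.mul_add,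
      trace_add, Complex.add_re, hsymm]
    ring
  nlinarith [norm_add_le X Y, norm_nonneg (X + Y), norm_nonneg X, norm_nonneg Y]

variable [DecidableEq n]

theorem PosDef.exists_isUnit_sqrt {H : Matrix n n ℂ} (hH : H.PosDef) :
    ∃ g : Matrix n n ℂ, IsUnit g ∧ gᴴ = g ∧ g * g = H := by
  open scoped MatrixOrder in
  have hsq := CFC.sqrt_mul_sqrt_self H hH.posSemidef.nonneg
  refine ⟨CFC.sqrt H, ?_, (CFC.sqrt_nonneg H).posSemidef.1, hsq⟩
  rw [isUnit_iff_isUnit_det]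
  refine isUnit_of_mul_isUnit_left (y := (CFC.sqrt H).det) ?_
  rw [← det_mul, hsq, ← isUnit_iff_isUnit_det]
  exact hH.isUnit

/-- `Φ` is conjugation `x ↦ g⁻¹ x g` by the positive square root `g` of `H`. -/
theorem PosDef.exists_algHom_trace_eq {H : Matrix n n ℂ} (hH : H.PosDef) :
    ∃ Φ : Matrix n n ℂ →ₐ[ℂ] Matrix n n ℂ,
      ∀ x y, (x * H * yᴴ * H⁻¹).trace = (Φ x * (Φ y)ᴴ).trace := by
  obtain ⟨g, hg, hgh, rfl⟩ := hH.exists_isUnit_sqrt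
  refine ⟨MulSemiringAction.toAlgHom ℂ _ (ConjAct.toConjAct hg.unit⁻¹), fun x y => ?_⟩
  have hunit : (↑hg.unit⁻¹ : Matrix n n ℂ) = g⁻¹ := by rw [coe_units_inv, IsUnit.unit_spec]
  have hinvh : g⁻¹ᴴ = g⁻¹ := by rw [conjTranspose_nonsing_inv, hgh]
  simp only [MulSemiringAction.toAlgHom_apply, ConjAct.units_smul_def, ConjAct.ofConjAct_toConjAct,
    inv_inv, IsUnit.unit_spec, hunit, conjTranspose_mul, hgh, hinvh, mul_inv_rev]
  simp only [Matrix.mul_assoc]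
  rw [trace_mul_comm g⁻¹]
  simp only [Matrix.mul_assoc]

end Matrix

theorem norm_lie_le_two_mul {R : Type*} [NormedRing R] (x y : R) : ‖⁅x, y⁆‖ ≤ 2 * ‖x‖ * ‖y‖ := by
  rw [Ring.lie_def]
  calc ‖x * y - y * x‖ ≤ ‖x‖ * ‖y‖ + ‖y‖ * ‖x‖ :=
        (norm_sub_le _ _).trans (add_le_add (norm_mul_le x y) (norm_mul_le y x))
    _ = 2 * ‖x‖ * ‖y‖ := by ring

section hNorm

theorem hNorm_nonneg (H x : Matrix (Fin 2) (Fin 2) ℂ) : 0 ≤ hNorm H x := Real.sqrt_nonneg _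

variable {H : Matrix (Fin 2) (Fin 2) ℂ}

theorem hNorm_eq_norm_div_sqrt_two {Φ : Matrix (Fin 2) (Fin 2) ℂ →ₐ[ℂ] Matrix (Fin 2) (Fin 2) ℂ}
    (hΦ : ∀ x y, (x * H * yᴴ * H⁻¹).trace = (Φ x * (Φ y)ᴴ).trace) (x : Matrix (Fin 2) (Fin 2) ℂ) :
    hNorm H x = ‖Φ x‖ / √2 := by
  have hre : ((2 : ℂ)⁻¹ * (Φ x * (Φ x)ᴴ).trace).re = ‖Φ x‖ ^ 2 / 2 := by
    rw [Matrix.frobenius_norm_sq_eq_re_trace, inv_mul_eq_div, Complex.div_ofNat_re]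
  rw [hNorm, hΦ, hre, Real.sqrt_div' _ zero_le_two, Real.sqrt_sq (norm_nonneg _)]

theorem sq_hNorm (hH : H.PosDef) (x : Matrix (Fin 2) (Fin 2) ℂ) :
    hNorm H x ^ 2 = (x * H * xᴴ * H⁻¹).trace.re / 2 := by
  obtain ⟨Φ, hΦ⟩ := hH.exists_algHom_trace_eq
  rw [hNorm_eq_norm_div_sqrt_two hΦ, hΦ, ← Matrix.frobenius_norm_sq_eq_re_trace, div_pow,
    Real.sq_sqrt zero_le_two]

theorem re_trace_le_two_mul_hNorm (hH : H.PosDef) (x y : Matrix (Fin 2) (Fin 2) ℂ) :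
    (x * H * yᴴ * H⁻¹).trace.re ≤ 2 * hNorm H x * hNorm H y := by
  obtain ⟨Φ, hΦ⟩ := hH.exists_algHom_trace_eq
  calc (x * H * yᴴ * H⁻¹).trace.re ≤ ‖Φ x‖ * ‖Φ y‖ := by
        rw [hΦ]; exact Matrix.re_trace_mul_conjTranspose_le _ _
    _ = 2 * hNorm H x * hNorm H y := by
        rw [hNorm_eq_norm_div_sqrt_two hΦ, hNorm_eq_norm_div_sqrt_two hΦ]
        field_simp
        rw [Real.sq_sqrt zero_le_two]

theorem hNorm_add_le (hH : H.PosDef) (x y : Matrix (Fin 2) (Fin 2) ℂ) :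
    hNorm H (x + y) ≤ hNorm H x + hNorm H y := by
  obtain ⟨Φ, hΦ⟩ := hH.exists_algHom_trace_eq
  simp only [hNorm_eq_norm_div_sqrt_two hΦ, map_add, ← add_div]
  gcongr
  exact norm_add_le _ _

theorem hNorm_smul (hH : H.PosDef) (c : ℂ) (x : Matrix (Fin 2) (Fin 2) ℂ) :
    hNorm H (c • x) = ‖c‖ * hNorm H x := by
  obtain ⟨Φ, hΦ⟩ := hH.exists_algHom_trace_eq
  simp only [hNorm_eq_norm_div_sqrt_two hΦ, map_smul, norm_smul, mul_div_assoc]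

theorem hNorm_lie_le (hH : H.PosDef) (x y : Matrix (Fin 2) (Fin 2) ℂ) :
    hNorm H ⁅x, y⁆ ≤ 2 * √2 * hNorm H x * hNorm H y := by
  obtain ⟨Φ, hΦ⟩ := hH.exists_algHom_trace_eq
  have hlie : Φ ⁅x, y⁆ = ⁅Φ x, Φ y⁆ := by simp only [Ring.lie_def, map_sub, map_mul]
  calc hNorm H ⁅x, y⁆ ≤ 2 * ‖Φ x‖ * ‖Φ y‖ / √2 := by
        rw [hNorm_eq_norm_div_sqrt_two hΦ, hlie]
        gcongr
        exact norm_lie_le_two_mul _ _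
    _ = 2 * √2 * hNorm H x * hNorm H y := by
        rw [hNorm_eq_norm_div_sqrt_two hΦ, hNorm_eq_norm_div_sqrt_two hΦ]
        field_simp

theorem hNorm_half_lie_le (hH : H.PosDef) (x y : Matrix (Fin 2) (Fin 2) ℂ) :
    hNorm H ((2 : ℂ)⁻¹ • ⁅x, y⁆) ≤ √2 * hNorm H x * hNorm H y := by
  rw [hNorm_smul hH, norm_inv, Complex.norm_ofNat]
  linarith [hNorm_lie_le hH x y]

theorem re_trace_half_lie_le_of_hNorm_le (hH : H.PosDef) {x v v₀ : Matrix (Fin 2) (Fin 2) ℂ}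
    {ε : ℝ} (hv₀ : hNorm H v₀ = 1) (hx : hNorm H x ≤ ε) :
    (((2 : ℂ)⁻¹ • ⁅x, v⁆) * H * (v - v₀)ᴴ * H⁻¹).trace.re
      ≤ 2 * (√2 * ε) * (hNorm H (v - v₀) + 1) * hNorm H (v - v₀) := by
  have hv : hNorm H v ≤ hNorm H (v - v₀) + 1 := by
    simpa [hv₀] using hNorm_add_le hH (v - v₀) v₀
  have hw := hNorm_nonneg H (v - v₀)
  calc _ ≤ 2 * hNorm H ((2 : ℂ)⁻¹ • ⁅x, v⁆) * hNorm H (v - v₀) :=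
        re_trace_le_two_mul_hNorm hH _ _
    _ ≤ 2 * (√2 * hNorm H x * hNorm H v) * hNorm H (v - v₀) :=
        mul_le_mul_of_nonneg_right (by linarith [hNorm_half_lie_le hH x v]) hw
    _ ≤ 2 * (√2 * ε * (hNorm H (v - v₀) + 1)) * hNorm H (v - v₀) := by
        have hxv := mul_le_mul hx hv (hNorm_nonneg H v) ((hNorm_nonneg H x).trans hx)
        nlinarith [mul_le_mul_of_nonneg_left hxv (mul_nonneg (Real.sqrt_nonneg 2) hw)]
    _ = _ := by ring

end hNorm

section Calculus

variable {n : Type*} [Fintype n]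

theorem HasDerivAt.re_trace {f : ℝ → Matrix n n ℂ} {f' : Matrix n n ℂ} {t : ℝ}
    (hf : HasDerivAt f f' t) : HasDerivAt (fun s => (f s).trace.re) f'.trace.re t :=
  (Complex.reCLM.comp (Matrix.traceLinearMap n ℝ ℂ).toContinuousLinearMap).hasFDerivAt
    |>.comp_hasDerivAt t hf

theorem Matrix.IsHermitian.of_hasDerivWithinAt {f : ℝ → Matrix n n ℂ} {f' : Matrix n n ℂ}
    {S : Set ℝ} {t : ℝ} (hf : HasDerivWithinAt f f' S t) (hS : UniqueDiffWithinAt ℝ S t)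
    (ht : t ∈ S) (hherm : ∀ s ∈ S, (f s).IsHermitian) : f'.IsHermitian :=
  hS.eq_deriv _ (hf.star.congr (fun s hs => (hherm s hs).symm) (hherm t ht).symm) hf

variable [DecidableEq n]

theorem HasDerivAt.sub_of_parallel {v v₀ : ℝ → Matrix n n ℂ} {A A₀ : Matrix n n ℂ} {t : ℝ}
    (hv : HasDerivAt v ((2 : ℂ)⁻¹ • ⁅A, v t⁆) t) (hv₀ : HasDerivAt v₀ ((2 : ℂ)⁻¹ • ⁅A₀, v₀ t⁆) t) :
    HasDerivAt (fun s => v s - v₀ s)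
      ((2 : ℂ)⁻¹ • ⁅A₀, v t - v₀ t⁆ + (2 : ℂ)⁻¹ • ⁅A - A₀, v t⁆) t :=
  (hv.sub hv₀).congr_deriv (by
    simp only [Ring.lie_def, ← smul_sub, ← smul_add]
    congr 1
    noncomm_ring)

theorem HasDerivAt.matrix_inv {f : ℝ → Matrix n n ℂ} {f' : Matrix n n ℂ} {t : ℝ}
    (hf : HasDerivAt f f' t) (ht : IsUnit (f t)) :
    HasDerivAt (fun s => (f s)⁻¹) (-((f t)⁻¹ * f' * (f t)⁻¹)) t := by
  obtain ⟨u, hu⟩ := ht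
  have hinv : (↑u⁻¹ : Matrix n n ℂ) = (f t)⁻¹ := by rw [Matrix.coe_units_inv, hu]
  have h := hasFDerivAt_ringInverse (𝕜 := ℝ) u
  rw [hu, hinv] at h
  have hcomp : (fun s => (f s)⁻¹) = Ring.inverse ∘ f :=
    funext fun s => Matrix.nonsing_inv_eq_ringInverse (f s)
  rw [hcomp]
  exact (h.comp_hasDerivAt t hf).congr_deriv (by simp)

/-- Product rule for `tr (w H wᴴ H⁻¹)` when `ẇ = ½ ⁅Ḣ H⁻¹, w⁆ + Z`: the commutator part of `ẇ`
(parallel transport) cancels against the variation of `H`, leaving only `Z`. -/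
theorem re_trace_deriv_eq_of_parallel {H H' w w' Z : Matrix n n ℂ} (hH : IsUnit H)
    (hHh : H.IsHermitian) (hH'h : H'.IsHermitian) (hw' : w' = (2 : ℂ)⁻¹ • ⁅H' * H⁻¹, w⁆ + Z) :
    (((w' * H + w * H') * wᴴ + w * H * w'ᴴ) * H⁻¹
      + w * H * wᴴ * -(H⁻¹ * H' * H⁻¹)).trace.re = 2 * (Z * H * wᴴ * H⁻¹).trace.re := by
  have hHinv : H * H⁻¹ = 1 := Matrix.mul_nonsing_inv H ((Matrix.isUnit_iff_isUnit_det H).mp hH)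
  have hinvH : H⁻¹ * H = 1 := Matrix.nonsing_inv_mul H ((Matrix.isUnit_iff_isUnit_det H).mp hH)
  have hinvh : H⁻¹ᴴ = H⁻¹ := by rw [Matrix.conjTranspose_nonsing_inv, hHh.eq]
  have cancel_left (X : Matrix n n ℂ) : H⁻¹ * (H * X) = X := by
    rw [← Matrix.mul_assoc, hinvH, Matrix.one_mul]
  have cancel_right (X : Matrix n n ℂ) : H * (H⁻¹ * X) = X := by
    rw [← Matrix.mul_assoc, hHinv, Matrix.one_mul]
  have hcyc : (H' * (H⁻¹ * (w * (H * (wᴴ * H⁻¹))))).trace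
      = (w * (H * (wᴴ * (H⁻¹ * (H' * H⁻¹))))).trace := by
    simpa only [Matrix.mul_assoc] using Matrix.trace_mul_comm (H' * H⁻¹) (w * H * wᴴ * H⁻¹)
  have hZ : (w * (H * (Zᴴ * H⁻¹))).trace = star (Z * (H * (wᴴ * H⁻¹))).trace := by
    rw [← Matrix.trace_conjTranspose]
    simpa only [Matrix.conjTranspose_mul, hHh.eq, hinvh, Matrix.conjTranspose_conjTranspose,
      Matrix.mul_assoc] using Matrix.trace_mul_comm (w * H * Zᴴ) H⁻¹
  have hcomplex : (((w' * H + w * H') * wᴴ + w * H * w'ᴴ) * H⁻¹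
      + w * H * wᴴ * -(H⁻¹ * H' * H⁻¹)).trace
        = (Z * (H * (wᴴ * H⁻¹))).trace + star (Z * (H * (wᴴ * H⁻¹))).trace := by
    subst hw'
    simp only [Ring.lie_def, Matrix.conjTranspose_add,
      Matrix.conjTranspose_smul, Matrix.conjTranspose_sub, Matrix.conjTranspose_mul, hH'h.eq,
      hinvh, Matrix.add_mul, Matrix.mul_add, Matrix.sub_mul, Matrix.mul_sub, Matrix.smul_mul,
      Matrix.mul_smul, Matrix.mul_assoc, Matrix.mul_neg, cancel_left, cancel_right,
      Matrix.trace_add, Matrix.trace_sub, Matrix.trace_smul, Matrix.trace_neg, hcyc, ← hZ,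
      star_inv₀, star_ofNat, smul_eq_mul]
    ring
  rw [hcomplex, Complex.add_re, Complex.star_def, Complex.conj_re]
  simp only [Matrix.mul_assoc]
  ring

end Calculus

theorem hasDerivWithinAt_sq_hNorm {H w : ℝ → Matrix (Fin 2) (Fin 2) ℂ}
    {H' Z : Matrix (Fin 2) (Fin 2) ℂ} {S : Set ℝ} {t : ℝ} (hH : HasDerivAt H H' t)
    (hH' : H'.IsHermitian)
    (hw : HasDerivAt w ((2 : ℂ)⁻¹ • ⁅H' * (H t)⁻¹, w t⁆ + Z) t)
    (hS : ∀ s ∈ S, (H s).PosDef) (ht : t ∈ S) :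
    HasDerivWithinAt (fun s => hNorm (H s) (w s) ^ 2)
      (Z * H t * (w t)ᴴ * (H t)⁻¹).trace.re S t := by
  have hu := (hS t ht).isUnit
  have hd := (((hw.fun_mul hH).fun_mul hw.star).fun_mul (hH.matrix_inv hu)).re_trace.congr_deriv
    (re_trace_deriv_eq_of_parallel hu (hS t ht).isHermitian hH' rfl)
  exact ((hd.div_const 2).hasDerivWithinAt.congr (fun s hs => sq_hNorm (hS s hs) _)
    (sq_hNorm (hS t ht) _)).congr_deriv (by ring)

theorem gronwallBound_self (δ K x : ℝ) :
    gronwallBound δ K K x = (δ + 1) * Real.exp (K * x) - 1 := by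
  rcases eq_or_ne K 0 with rfl | hK
  · simp [gronwallBound_K0]
  · rw [gronwallBound_of_K_ne_0 hK, div_self hK]
    ring

theorem add_one_le_of_hasDerivWithinAt_sq {ψ D : ℝ → ℝ} {a b K : ℝ} (hK : 0 ≤ K)
    (hψ0 : ∀ x ∈ Icc a b, 0 ≤ ψ x)
    (hψ : ∀ x ∈ Icc a b, HasDerivWithinAt (fun y => ψ y ^ 2) (D x) (Icc a b) x)
    (hD : ∀ x ∈ Ico a b, D x ≤ 2 * K * (ψ x + 1) * ψ x) :
    ∀ x ∈ Icc a b, ψ x + 1 ≤ (ψ a + 1) * Real.exp (K * (x - a)) := by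
  intro x hx
  -- `ψ` need not be differentiable where it vanishes: run Grönwall on `√(ψ² + η)`, then `η → 0`.
  have hψ_le (y : ℝ) (hy : y ∈ Icc a b) {η : ℝ} (hη : 0 < η) : ψ y ≤ √(ψ y ^ 2 + η) := by
    calc ψ y = √(ψ y ^ 2) := (Real.sqrt_sq (hψ0 y hy)).symm
      _ ≤ √(ψ y ^ 2 + η) := Real.sqrt_le_sqrt (by linarith)
  have hreg : ∀ η > 0, ψ x + 1 ≤ (√(ψ a ^ 2 + η) + 1) * Real.exp (K * (x - a)) := by
    intro η hη
    have hpos (y : ℝ) : 0 < ψ y ^ 2 + η := by positivity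
    have hρ : ∀ y ∈ Icc a b, HasDerivWithinAt (fun y => √(ψ y ^ 2 + η))
        (D y / (2 * √(ψ y ^ 2 + η))) (Icc a b) y :=
      fun y hy => ((hψ y hy).add_const η).sqrt (hpos y).ne'
    have hbound : ∀ y ∈ Ico a b, D y / (2 * √(ψ y ^ 2 + η)) ≤ K * √(ψ y ^ 2 + η) + K := by
      intro y hy
      have hle := hψ_le y (Ico_subset_Icc_self hy) hη
      have hψy := hψ0 y (Ico_subset_Icc_self hy)
      rw [div_le_iff₀ (by positivity)]
      calc D y ≤ 2 * K * (ψ y + 1) * ψ y := hD y hy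
        _ ≤ 2 * K * (√(ψ y ^ 2 + η) + 1) * √(ψ y ^ 2 + η) := by gcongr
        _ = _ := by ring
    have hgr := le_gronwallBound_of_liminf_deriv_right_le
      (fun y hy => (hρ y hy).continuousWithinAt)
      (fun y hy r hr => ((hρ y (Ico_subset_Icc_self hy)).mono_of_mem_nhdsWithin
        (Icc_mem_nhdsGE_of_mem hy)).liminf_right_slope_le hr)
      le_rfl hbound x hx
    rw [gronwallBound_self] at hgr
    linarith [hψ_le x hx hη]
  have hcont : ContinuousAt (fun η => (√(ψ a ^ 2 + η) + 1) * Real.exp (K * (x - a))) 0 := by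
    fun_prop
  have hlim : Tendsto (fun η => (√(ψ a ^ 2 + η) + 1) * Real.exp (K * (x - a))) (𝓝[>] 0)
      (𝓝 ((ψ a + 1) * Real.exp (K * (x - a)))) := by
    simpa [Real.sqrt_sq (hψ0 a (left_mem_Icc.mpr (hx.1.trans hx.2)))]
      using hcont.tendsto.mono_left nhdsWithin_le_nhds
  exact ge_of_tendsto hlim (eventually_nhdsWithin_of_forall hreg)

theorem Real.exp_le_one_add_two_mul {x : ℝ} (h0 : 0 ≤ x) (h1 : x ≤ 1 / 2) :
    Real.exp x ≤ 1 + 2 * x := by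
  calc Real.exp x ≤ 1 / (1 - x) := Real.exp_bound_div_one_sub_of_interval h0 (by linarith)
    _ ≤ 1 + 2 * x := by
        rw [div_le_iff₀ (by linarith)]
        nlinarith

theorem le_two_mul_add_of_add_one_le_mul_exp {x x₀ ε L t : ℝ} (hx₀ : 0 ≤ x₀) (hε : 0 ≤ ε)
    (hεL : ε * (4 * L) ≤ 1) (ht : t ∈ Icc 0 L) (h : x + 1 ≤ (x₀ + 1) * Real.exp (√2 * ε * t)) :
    x ≤ 2 * x₀ + 4 * L * ε := by
  have hsqrt2 : √2 ≤ 2 := Real.sqrt_le_iff.mpr ⟨zero_le_two, by norm_num⟩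
  have hεt : √2 * ε * t ≤ 2 * ε * L :=
    mul_le_mul (mul_le_mul_of_nonneg_right hsqrt2 hε) ht.2 ht.1 (by positivity)
  have hexp := Real.exp_le_one_add_two_mul (mul_nonneg (by positivity) ht.1)
    (by linarith : √2 * ε * t ≤ 1 / 2)
  nlinarith [mul_le_mul_of_nonneg_left hexp (by linarith : 0 ≤ x₀ + 1)]

theorem stmt_9_general (L ε : ℝ) (hL : 0 < L) (hε0 : 0 < ε) (hε : ε ≤ 1 / (4 * L))
    (c c₀ v v₀ : ℝ → Matrix (Fin 2) (Fin 2) ℂ)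
    (hc₀ : ∀ t ∈ Set.Icc (0 : ℝ) L, memD (c₀ t))
    (hdc₀ : Differentiable ℝ c₀)
    -- `v` is parallel along `c`:  `v̇ = ½ [ċ c⁻¹, v]`
    (hv : ∀ t ∈ Set.Icc (0 : ℝ) L,
      HasDerivAt v ((2 : ℂ)⁻¹ • ⁅deriv c t * (c t)⁻¹, v t⁆) t)
    (hv₀ : ∀ t ∈ Set.Icc (0 : ℝ) L,
      HasDerivAt v₀ ((2 : ℂ)⁻¹ • ⁅deriv c₀ t * (c₀ t)⁻¹, v₀ t⁆) t)
    -- `v` and `v₀` are unit vector fields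
    (hunit₀ : ∀ t ∈ Set.Icc (0 : ℝ) L, hNorm (c₀ t) (v₀ t) = 1)
    -- the curves are `C¹ε`-close
    (hclose : ∀ t ∈ Set.Icc (0 : ℝ) L,
      hNorm (c₀ t) (deriv c t * (c t)⁻¹ - deriv c₀ t * (c₀ t)⁻¹) < ε) :
    ∀ t ∈ Set.Icc (0 : ℝ) L,
      hNorm (c₀ t) (v t - v₀ t) ≤ 2 * hNorm (c₀ 0) (v 0 - v₀ 0) + 4 * L * ε := by
  have hpd : ∀ t ∈ Icc 0 L, (c₀ t).PosDef := fun t ht => (hc₀ t ht).2.2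
  have hderiv : ∀ t ∈ Icc 0 L, HasDerivWithinAt (fun s => hNorm (c₀ s) (v s - v₀ s) ^ 2)
      (((2 : ℂ)⁻¹ • ⁅deriv c t * (c t)⁻¹ - deriv c₀ t * (c₀ t)⁻¹, v t⁆) * c₀ t
        * (v t - v₀ t)ᴴ * (c₀ t)⁻¹).trace.re (Icc 0 L) t :=
    fun t ht => hasDerivWithinAt_sq_hNorm (hdc₀ t).hasDerivAt
      (Matrix.IsHermitian.of_hasDerivWithinAt (hdc₀ t).hasDerivAt.hasDerivWithinAt
        (uniqueDiffOn_Icc hL t ht) ht fun s hs => (hc₀ s hs).1)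
      ((hv t ht).sub_of_parallel (hv₀ t ht)) hpd ht
  intro t ht
  refine le_two_mul_add_of_add_one_le_mul_exp (hNorm_nonneg _ _) hε0.le
    ((le_div_iff₀ (by positivity)).mp hε) ht ?_
  simpa using add_one_le_of_hasDerivWithinAt_sq (by positivity) (fun _ _ => hNorm_nonneg _ _)
    hderiv (fun s hs => re_trace_half_lie_le_of_hNorm_le (hpd s (Ico_subset_Icc_self hs))
      (hunit₀ s (Ico_subset_Icc_self hs)) (hclose s (Ico_subset_Icc_self hs)).le) t ht

/-- Parallel translation for `C¹`-close curves in `ℍ³`: if `c, c₀` are `C¹` curves in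
the matrix model of `ℍ³` with unit parallel vector fields `v, v₀` along them, and
`‖ċ c⁻¹ - ċ₀ c₀⁻¹‖_{c₀(t)} < ε ≤ 1/(4L)` on `[0, L]`, then
`‖v(t) - v₀(t)‖_{c₀(t)} ≤ 2 ‖v(0) - v₀(0)‖_{c₀(0)} + 4 L ε` on `[0, L]`. -/
theorem stmt_9 (L ε : ℝ) (hL : 0 < L) (hε0 : 0 < ε) (hε : ε ≤ 1 / (4 * L))
    (c c₀ v v₀ : ℝ → Matrix (Fin 2) (Fin 2) ℂ)
    (hc : ∀ t ∈ Set.Icc (0 : ℝ) L, memD (c t))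
    (hc₀ : ∀ t ∈ Set.Icc (0 : ℝ) L, memD (c₀ t))
    (hdc : Differentiable ℝ c) (hdc₀ : Differentiable ℝ c₀)
    -- `v` is parallel along `c`:  `v̇ = ½ [ċ c⁻¹, v]`
    (hv : ∀ t ∈ Set.Icc (0 : ℝ) L,
      HasDerivAt v ((2 : ℂ)⁻¹ • ⁅deriv c t * (c t)⁻¹, v t⁆) t)
    (hv₀ : ∀ t ∈ Set.Icc (0 : ℝ) L,
      HasDerivAt v₀ ((2 : ℂ)⁻¹ • ⁅deriv c₀ t * (c₀ t)⁻¹, v₀ t⁆) t)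
    -- `v` and `v₀` are unit vector fields
    (hunit : ∀ t ∈ Set.Icc (0 : ℝ) L, hNorm (c t) (v t) = 1)
    (hunit₀ : ∀ t ∈ Set.Icc (0 : ℝ) L, hNorm (c₀ t) (v₀ t) = 1)
    -- the curves are `C¹ε`-close
    (hclose : ∀ t ∈ Set.Icc (0 : ℝ) L,
      hNorm (c₀ t) (deriv c t * (c t)⁻¹ - deriv c₀ t * (c₀ t)⁻¹) < ε) :
    ∀ t ∈ Set.Icc (0 : ℝ) L,
      hNorm (c₀ t) (v t - v₀ t) ≤ 2 * hNorm (c₀ 0) (v 0 - v₀ 0) + 4 * L * ε :=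
  stmt_9_general L ε hL hε0 hε c c₀ v v₀ hc₀ hdc₀ hv hv₀ hunit₀ hclose
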